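/- Fix integers 3 ≤ l < r. For ρ ∈ [0,1] define α^BEC(ρ,0) = max_{(0,x_c,y)∈D(ρ)} f(0,x_c,y,ρ), the maximum being over points of D(ρ) with first coordinate x₀ = 0. Suppose α^BEC(ρ,0) = 0 and the maximum is achieved only at the point (0,0,0). Then there exists N such that for all n ≥ N and all δ ∈ [−√(ln n / n), √(ln n / n)] with ρ + δ ∈ [0,1], one has α^BEC(ρ+δ,0) = 0. -/

import Mathlib

open Finset

noncomputable section

/-- Binary entropy in nats, with the convention `0 * log 0 = 0`
(automatic since `Real.log 0 = 0`). -/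
def h2 (x : ℝ) : ℝ := -x * Real.log x - (1 - x) * Real.log (1 - x)

/-- Membership in the domain `D(ρ) ⊆ [0,1]^{2+⌊r/2⌋}`.  The coordinate `y t`
for `t : Fin (r/2)` represents `y_{t+1}`, the fraction of check nodes of
induced degree `2*(t+1)`. -/
def memD (r : ℕ) (ρ x₀ xc : ℝ) (y : Fin (r / 2) → ℝ) : Prop :=
  x₀ ∈ Set.Icc (0 : ℝ) 1 ∧ xc ∈ Set.Icc (0 : ℝ) 1 ∧ (∀ t, y t ∈ Set.Icc (0 : ℝ) 1) ∧
    (∑ t, y t) ≤ 1 ∧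
    (∑ t : Fin (r / 2), (2 * ((t : ℕ) + 1) : ℝ) / (r : ℝ) * y t) = (1 - ρ) * x₀ + ρ * xc

/-- The growth-rate function `f(x₀, x_c, y, ρ)`. -/
def fFun (l r : ℕ) (x₀ xc : ℝ) (y : Fin (r / 2) → ℝ) (ρ : ℝ) : ℝ :=
  -(l : ℝ) * h2 ((1 - ρ) * x₀ + ρ * xc) + (1 - ρ) * h2 x₀ + ρ * h2 xc
    - (l : ℝ) / (r : ℝ) * ((1 - ∑ t, y t) * Real.log (1 - ∑ t, y t))
    - (l : ℝ) / (r : ℝ) * ∑ t, y t * Real.log (y t)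
    + (l : ℝ) / (r : ℝ) *
        ∑ t : Fin (r / 2), y t * Real.log (Nat.choose r (2 * ((t : ℕ) + 1)))

/-- The leading exponent of the loop series for the BEC:
`α^BEC(ρ,η) = max_{(0,x_c,y) ∈ D(ρ)} [f(0,x_c,y,ρ) - 2η ρ x_c]`, the maximum
(formalized as a supremum) running over the points of the compact domain
`D(ρ)` whose first coordinate is `x₀ = 0`. -/
def alphaBEC (l r : ℕ) (ρ η : ℝ) : ℝ :=
  sSup {z : ℝ | ∃ (xc : ℝ) (y : Fin (r / 2) → ℝ), memD r ρ 0 xc y ∧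
    z = fFun l r 0 xc y ρ - 2 * η * (ρ * xc)}

/-!
Put `s = ρ x_c`. On the slice `x₀ = 0` of `D(ρ)` the growth rate is at most
`(l/2 - 1) s log s + C s`, uniformly in `ρ ∈ [0,1]`: the `y`-entropy is controlled termwise by
Gibbs' inequality against the weights `C(r,2t) s^t`, and the constraint turns `Σ t y_t` into
`r s / 2`. As `l ≥ 3`, this is `≤ 0` for `s ≤ s₀`. The points `(ρ', x_c, y)` with `f ≥ 0` and
`s ≥ s₀` form a compact set whose projection misses `ρ` by uniqueness of the maximiser, so for
`ρ'` near `ρ` the whole slice has `f ≤ 0`, i.e. `α^BEC(ρ', 0) = 0`; finally `√(ln n / n) → 0`.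
-/

open Filter Topology Real

lemma h2_eq_binEntropy : h2 = binEntropy := by
  ext x
  simp only [h2, binEntropy_eq_negMulLog_add_negMulLog_one_sub, negMulLog]
  ring

@[fun_prop]
lemma continuous_h2 : Continuous h2 := h2_eq_binEntropy ▸ binEntropy_continuous

lemma neg_mul_log_le_h2 {x : ℝ} (h0 : 0 ≤ x) (h1 : x ≤ 1) : -(x * log x) ≤ h2 x := by
  have := mul_log_nonpos (sub_nonneg.2 h1) (sub_le_self 1 h0)
  simp only [h2]
  linarith

lemma h2_le_neg_mul_log_add_self {x : ℝ} (h1 : x ≤ 1) : h2 x ≤ -(x * log x) + x := by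
  have := self_sub_one_le_mul_log (sub_nonneg.2 h1)
  simp only [h2]
  linarith

lemma mul_log_sub_mul_log_le {a y : ℝ} (ha : 0 < a) (hy : 0 ≤ y) :
    y * log a - y * log y ≤ a - y := by
  rcases hy.eq_or_lt with rfl | hy
  · simpa using ha.le
  have h := log_le_sub_one_of_pos (div_pos ha hy)
  rw [log_div ha.ne' hy.ne'] at h
  have : y * (a / y - 1) = a - y := by field_simp
  nlinarith [mul_le_mul_of_nonneg_left h hy.le]

lemma fFun_zero (l r : ℕ) (ρ : ℝ) : fFun l r 0 0 0 ρ = 0 := by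
  simp [fFun, h2]

lemma memD_zero (r : ℕ) (ρ : ℝ) : memD r ρ 0 0 0 := by
  simp [memD]

lemma isCompact_setOf_memD (r : ℕ) :
    IsCompact {p : ℝ × ℝ × (Fin (r / 2) → ℝ) | p.1 ∈ Set.Icc 0 1 ∧ memD r p.1 0 p.2.1 p.2.2} := by
  have hbox : IsCompact (Set.Icc ((0 : ℝ), (0 : ℝ), (0 : Fin (r / 2) → ℝ)) (1, 1, 1)) :=
    isCompact_Icc
  refine hbox.of_isClosed_subset ?_ ?_
  · simp only [memD, Set.mem_Icc, Set.ofPred_and, Set.ofPred_forall]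
    repeat' first
      | apply IsClosed.inter | (apply isClosed_iInter; intro) | apply isClosed_le | apply isClosed_eq
    all_goals fun_prop
  · rintro p ⟨hp, -, hxc, hy, -⟩
    exact ⟨⟨hp.1, hxc.1, fun t => (hy t).1⟩, ⟨hp.2, hxc.2, fun t => (hy t).2⟩⟩

lemma continuous_fFun (l r : ℕ) :
    Continuous fun p : ℝ × ℝ × (Fin (r / 2) → ℝ) => fFun l r 0 p.2.1 p.2.2 p.1 := by
  unfold fFun; fun_prop

lemma tendsto_sqrt_log_div_self_atTop :
    Tendsto (fun n : ℕ => √(log n / n)) atTop (𝓝 0) := by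
  have h := (isLittleO_log_id_atTop.tendsto_div_nhds_zero.comp tendsto_natCast_atTop_atTop).sqrt
  rwa [sqrt_zero] at h

section SmallOverlap

variable {l r : ℕ} {ρ xc : ℝ} {y : Fin (r / 2) → ℝ}

lemma sum_succ_mul_eq_of_memD (hr : 0 < r) (hmem : memD r ρ 0 xc y) :
    ∑ t : Fin (r / 2), ((t : ℕ) + 1 : ℝ) * y t = r / 2 * (ρ * xc) := by
  obtain ⟨-, -, -, -, hcon⟩ := hmem
  rw [mul_zero, zero_add] at hcon
  rw [← hcon, mul_sum]
  refine sum_congr rfl fun t _ => ?_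
  field_simp

lemma sum_le_of_memD (hr : 0 < r) (hmem : memD r ρ 0 xc y) :
    ∑ t, y t ≤ r / 2 * (ρ * xc) := by
  rw [← sum_succ_mul_eq_of_memD hr hmem]
  refine sum_le_sum fun t _ => ?_
  have := (hmem.2.2.1 t).1
  nlinarith [(t : ℕ).cast_nonneg (α := ℝ)]

lemma eq_zero_of_memD_of_mul_eq_zero (hr : 0 < r) (hmem : memD r ρ 0 xc y)
    (h : ρ * xc = 0) : y = 0 := by
  have hsum := sum_succ_mul_eq_of_memD hr hmem
  rw [h, mul_zero, sum_eq_zero_iff_of_nonneg fun t _ =>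
    mul_nonneg (by positivity) (hmem.2.2.1 t).1] at hsum
  funext t
  simpa [(by positivity : ((t : ℕ) + 1 : ℝ) ≠ 0)] using hsum t (mem_univ t)

lemma fFun_eq_zero_of_mul_eq_zero (hr : 0 < r) (hmem : memD r ρ 0 xc y) (h : ρ * xc = 0) :
    fFun l r 0 xc y ρ = 0 := by
  obtain rfl := eq_zero_of_memD_of_mul_eq_zero hr hmem h
  rcases mul_eq_zero.1 h with rfl | rfl <;> simp [fFun, h2]

lemma sum_mul_log_choose_sub_le {s : ℝ} (hs : 0 < s) (hs1 : s ≤ 1) (hy : ∀ t, 0 ≤ y t)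
    (hw : ∑ t : Fin (r / 2), ((t : ℕ) + 1 : ℝ) * y t = r / 2 * s) :
    ∑ t : Fin (r / 2), (y t * log (r.choose (2 * ((t : ℕ) + 1))) - y t * log (y t))
      ≤ r * 2 ^ r * s - r / 2 * (s * log s) := by
  have hterm (t : Fin (r / 2)) : y t * log (r.choose (2 * ((t : ℕ) + 1))) - y t * log (y t)
      ≤ 2 ^ r * s - log s * (((t : ℕ) + 1 : ℝ) * y t) := by
    have hc : (0 : ℝ) < r.choose (2 * ((t : ℕ) + 1)) := by
      exact_mod_cast Nat.choose_pos (by omega)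
    have hgibbs := mul_log_sub_mul_log_le (mul_pos hc (pow_pos hs ((t : ℕ) + 1))) (hy t)
    rw [log_mul hc.ne' (pow_pos hs _).ne', log_pow] at hgibbs
    have hc2 : (r.choose (2 * ((t : ℕ) + 1)) : ℝ) ≤ 2 ^ r := by
      exact_mod_cast Nat.choose_le_two_pow r _
    have hpow : s ^ ((t : ℕ) + 1) ≤ s := pow_le_of_le_one hs.le hs1 (by omega)
    push_cast at hgibbs
    nlinarith [hy t, mul_le_mul hc2 hpow (pow_pos hs _).le (by positivity)]
  have hcard : ((r / 2 : ℕ) : ℝ) ≤ r := by exact_mod_cast Nat.div_le_self r 2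
  calc _ ≤ ∑ t : Fin (r / 2), (2 ^ r * s - log s * (((t : ℕ) + 1 : ℝ) * y t)) :=
        sum_le_sum fun t _ => hterm t
    _ = (r / 2 : ℕ) * (2 ^ r * s) - r / 2 * (s * log s) := by
        rw [sum_sub_distrib, ← mul_sum (a := log s), hw, sum_const, card_univ,
          Fintype.card_fin, nsmul_eq_mul]
        ring
    _ ≤ r * 2 ^ r * s - r / 2 * (s * log s) := by
        nlinarith [mul_le_mul_of_nonneg_right hcard (by positivity : (0 : ℝ) ≤ 2 ^ r * s)]

lemma fFun_le_of_mul_pos (hr : 0 < r) (hρ : ρ ∈ Set.Icc 0 1) (hmem : memD r ρ 0 xc y)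
    (hs : 0 < ρ * xc) :
    fFun l r 0 xc y ρ
      ≤ ((l : ℝ) / 2 - 1) * (ρ * xc * log (ρ * xc)) + (1 + l / 2 + l * 2 ^ r) * (ρ * xc) := by
  have ⟨_, hxc, hy, hY, _⟩ := hmem
  set s := ρ * xc
  have hs1 : s ≤ 1 := mul_le_one₀ hρ.2 hxc.1 hxc.2
  have hcorr : -l * h2 s + ρ * h2 xc ≤ ((l : ℝ) - 1) * (s * log s) + s := by
    have hl := mul_le_mul_of_nonneg_left (neg_mul_log_le_h2 hs.le hs1) l.cast_nonneg
    have hρxc := mul_le_mul_of_nonneg_left (h2_le_neg_mul_log_add_self hxc.2) hρ.1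
    -- `ρ (-xc log xc) ≤ -s log s`, from `negMulLog (ρ xc) = xc negMulLog ρ + ρ negMulLog xc`
    have hsplit := negMulLog_mul ρ xc
    have hρent := mul_nonneg hxc.1 (negMulLog_nonneg hρ.1 hρ.2)
    simp only [negMulLog, neg_mul] at hsplit hρent
    nlinarith
  have hcheck : -((l : ℝ) / r * ((1 - ∑ t, y t) * log (1 - ∑ t, y t))) ≤ l / 2 * s := by
    have h : -((1 - ∑ t, y t) * log (1 - ∑ t, y t)) ≤ r / 2 * s := by
      linarith [self_sub_one_le_mul_log (sub_nonneg.2 hY), sum_le_of_memD hr hmem]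
    have hlr : (l : ℝ) / r * (r / 2 * s) = l / 2 * s := by field_simp
    nlinarith [mul_le_mul_of_nonneg_left h (by positivity : (0 : ℝ) ≤ l / r)]
  have hchoose : (l : ℝ) / r * ∑ t : Fin (r / 2), y t * log (r.choose (2 * ((t : ℕ) + 1)))
      - l / r * ∑ t, y t * log (y t) ≤ l * 2 ^ r * s - l / 2 * (s * log s) := by
    have h := sum_mul_log_choose_sub_le hs hs1 (fun t => (hy t).1)
      (sum_succ_mul_eq_of_memD hr hmem)
    rw [sum_sub_distrib] at h
    have hlr : (l : ℝ) / r * (r * 2 ^ r * s - r / 2 * (s * log s))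
        = l * 2 ^ r * s - l / 2 * (s * log s) := by field_simp
    nlinarith [mul_le_mul_of_nonneg_left h (by positivity : (0 : ℝ) ≤ l / r)]
  have h2_zero : h2 0 = 0 := by simp [h2]
  simp only [fFun, mul_zero, zero_add, h2_zero, add_zero]
  linarith

lemma exists_fFun_nonpos_of_mul_le (hl : 3 ≤ l) (hr : 0 < r) :
    ∃ s₀ > 0, ∀ ρ xc (y : Fin (r / 2) → ℝ), ρ ∈ Set.Icc 0 1 → memD r ρ 0 xc y →
      ρ * xc ≤ s₀ → fFun l r 0 xc y ρ ≤ 0 := by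
  set C : ℝ := 1 + l / 2 + l * 2 ^ r with hC_def
  -- for `s ≤ exp (-2C)`: `(l/2 - 1) s log s ≤ (s log s) / 2 ≤ -C s`
  refine ⟨exp (-2 * C), exp_pos _, fun ρ xc y hρ hmem hsmall => ?_⟩
  rcases (mul_nonneg hρ.1 hmem.2.1.1).eq_or_lt with hs | hs
  · exact (fFun_eq_zero_of_mul_eq_zero hr hmem hs.symm).le
  have hlog : log (ρ * xc) ≤ -2 * C := by
    simpa using log_le_log hs hsmall
  have hl' : (1 : ℝ) / 2 ≤ l / 2 - 1 := by
    have : (3 : ℝ) ≤ l := by exact_mod_cast hl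
    linarith
  have hC : 0 ≤ C := by positivity
  have hslog : ρ * xc * log (ρ * xc) ≤ -2 * C * (ρ * xc) := by nlinarith
  have hneg : ρ * xc * log (ρ * xc) ≤ 0 := by nlinarith
  have hf := fFun_le_of_mul_pos (l := l) hr hρ hmem hs
  rw [← hC_def] at hf
  nlinarith [mul_nonpos_of_nonneg_of_nonpos (sub_nonneg.2 hl') hneg]

end SmallOverlap

lemma eventually_fFun_nonpos {l r : ℕ} (hl : 3 ≤ l) (hr : 0 < r) {ρ : ℝ}
    (hmax : ∀ (xc : ℝ) (y : Fin (r / 2) → ℝ), memD r ρ 0 xc y →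
      ¬(xc = 0 ∧ y = 0) → fFun l r 0 xc y ρ < fFun l r 0 0 0 ρ) :
    ∀ᶠ ρ' in 𝓝 ρ, ρ' ∈ Set.Icc 0 1 →
      ∀ xc (y : Fin (r / 2) → ℝ), memD r ρ' 0 xc y → fFun l r 0 xc y ρ' ≤ 0 := by
  obtain ⟨s₀, hs₀, hsmall⟩ := exists_fFun_nonpos_of_mul_le hl hr
  -- the points with `f ≥ 0` away from the origin form a compact set whose shadow misses `ρ`
  set K := {p : ℝ × ℝ × (Fin (r / 2) → ℝ) | p.1 ∈ Set.Icc 0 1 ∧ memD r p.1 0 p.2.1 p.2.2} ∩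
    {p | 0 ≤ fFun l r 0 p.2.1 p.2.2 p.1 ∧ s₀ ≤ p.1 * p.2.1}
  have hK : IsCompact K := (isCompact_setOf_memD r).inter_right <|
    (isClosed_le continuous_const (continuous_fFun l r)).inter
      (isClosed_le continuous_const (continuous_fst.mul (continuous_fst.comp continuous_snd)))
  have hρK : ρ ∉ Prod.fst '' K := by
    rintro ⟨⟨_, xc, y⟩, ⟨⟨-, hmem⟩, hf, hs⟩, rfl⟩
    have hxc : xc ≠ 0 := by rintro rfl; simp at hs; linarith
    have := hmax xc y hmem (fun h => hxc h.1)
    rw [fFun_zero] at this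
    linarith
  filter_upwards [(hK.image continuous_fst).isClosed.isOpen_compl.mem_nhds hρK]
    with ρ' hρ'K hρ' xc y hmem
  by_contra! hpos
  refine hρ'K ⟨(ρ', xc, y), ⟨⟨hρ', hmem⟩, hpos.le, ?_⟩, rfl⟩
  by_contra! hlt
  exact hpos.not_ge (hsmall ρ' xc y hρ' hmem hlt.le)

lemma alphaBEC_eq_zero_of_fFun_nonpos {l r : ℕ} {ρ : ℝ}
    (h : ∀ xc (y : Fin (r / 2) → ℝ), memD r ρ 0 xc y → fFun l r 0 xc y ρ ≤ 0) :
    alphaBEC l r ρ 0 = 0 := by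
  refine IsGreatest.csSup_eq ⟨⟨0, 0, memD_zero r ρ, by simp [fFun_zero]⟩, ?_⟩
  rintro _ ⟨xc, y, hmem, rfl⟩
  simpa using h xc y hmem

theorem alphaBEC_stable_under_perturbation_general (l r : ℕ) (hl : 3 ≤ l) (hlr : l < r)
    (ρ : ℝ)
    (hmax : ∀ (xc : ℝ) (y : Fin (r / 2) → ℝ), memD r ρ 0 xc y →
      ¬(xc = 0 ∧ y = 0) → fFun l r 0 xc y ρ < fFun l r 0 0 0 ρ) :
    ∃ N : ℕ, ∀ n : ℕ, N ≤ n → ∀ δ : ℝ,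
      -Real.sqrt (Real.log n / n) ≤ δ → δ ≤ Real.sqrt (Real.log n / n) →
      ρ + δ ∈ Set.Icc (0 : ℝ) 1 → alphaBEC l r (ρ + δ) 0 = 0 := by
  obtain ⟨ε, hε, hnear⟩ :=
    Metric.eventually_nhds_iff.1 (eventually_fFun_nonpos hl (by omega) hmax)
  obtain ⟨N, hN⟩ := eventually_atTop.1 (tendsto_sqrt_log_div_self_atTop.eventually_lt_const hε)
  refine ⟨N, fun n hn δ hδl hδu hρδ => alphaBEC_eq_zero_of_fFun_nonpos (hnear ?_ hρδ)⟩
  rw [Real.dist_eq, add_sub_cancel_left, abs_lt]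
  constructor <;> linarith [hN n hn]

/-- **Lemma 2 (BEC case).**  If `α^BEC(ρ,0) = 0` and the maximum over the
slice `{(0,x_c,y) ∈ D(ρ)}` is achieved only at `(0,0,0)`, then for all
sufficiently large `n`, for every `δ ∈ [-√(ln n / n), √(ln n / n)]` with
`ρ + δ ∈ [0,1]`, one still has `α^BEC(ρ+δ, 0) = 0`. -/
theorem alphaBEC_stable_under_perturbation (l r : ℕ) (hl : 3 ≤ l) (hlr : l < r)
    (ρ : ℝ) (hρ : ρ ∈ Set.Icc (0 : ℝ) 1)
    (hzero : alphaBEC l r ρ 0 = 0)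
    (hmax : ∀ (xc : ℝ) (y : Fin (r / 2) → ℝ), memD r ρ 0 xc y →
      ¬(xc = 0 ∧ y = 0) → fFun l r 0 xc y ρ < fFun l r 0 0 0 ρ) :
    ∃ N : ℕ, ∀ n : ℕ, N ≤ n → ∀ δ : ℝ,
      -Real.sqrt (Real.log n / n) ≤ δ → δ ≤ Real.sqrt (Real.log n / n) →
      ρ + δ ∈ Set.Icc (0 : ℝ) 1 → alphaBEC l r (ρ + δ) 0 = 0 :=
  alphaBEC_stable_under_perturbation_general l r hl hlr ρ hmax
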